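/- Let v ∈ [0,1)^𝑁 and u ∈ (ρ(v), 1]. Define H(x) = B_𝑁(x,v) + B̄_𝑁(x) − b_1·x, y_0(t) = u for all t ≥ 0, and recursively y_{n+1}(t) = e^{b_1 t}·(u + ∫_0^t e^{−b_1 s} H(y_n(s)) ds). Then for every n ≥ 0 and every t ≥ 0 one has ρ(v) < y_n(t) ≤ u and y_{n+1}(t) ≤ y_n(t). -/

import Mathlib

/-!
On `[0, 1]`, `H` is a power series with nonnegative coefficients, hence nondecreasing, convex and
continuous there. `H(x) + b₁x = B̄_𝑁(x) + B_𝑁(x, v)` vanishes at `ρ(v)` and is `≤ 0` at `1`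
(since `∑ b_j = 0` and `v_j ≤ 1`), so by convexity `H(u) ≤ -b₁u`, while `H(ρ(v)) = -b₁ρ(v)`.

The recursion is Duhamel's formula for `y' = b₁y + H(y_n)`, `y(0) = u`: it is monotone in the
forcing term, and the constant forcing `-b₁C` gives `C + e^{b₁t}(u - C)`. Comparing with `C = u` and
`C = ρ(v)` keeps every iterate in `(ρ(v), u]`; then `y₁ ≤ y₀ = u`, and monotonicity of `H` propagates
`y_{n+1} ≤ y_n` by induction.
-/

open Set MeasureTheory

lemma tsum_ite_add_sum {ι α : Type*} [DecidableEq ι] [AddCommMonoid α] [TopologicalSpace α]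
    [ContinuousAdd α] [T2Space α] {N : Finset ι} {f g : ι → α}
    (hf : Summable fun j => if j ∈ N then 0 else f j) :
    (∑' j, if j ∈ N then 0 else f j) + ∑ j ∈ N, g j = ∑' j, if j ∈ N then g j else f j := by
  have hg : HasSum (fun j => if j ∈ N then g j else 0) (∑ j ∈ N, g j) := by
    convert hasSum_sum_of_ne_finset_zero (L := SummationFilter.unconditional ι) (s := N)
      (f := fun j => if j ∈ N then g j else 0) fun j hj => if_neg hj using 1
    exact (Finset.sum_congr rfl fun j hj => if_pos hj).symm
  rw [← hg.tsum_eq, ← hf.tsum_add hg.summable]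
  congr 1 with j
  split_ifs <;> simp

lemma Summable.ite_mem_finset {ι α : Type*} [DecidableEq ι] [AddCommGroup α] [TopologicalSpace α]
    [IsTopologicalAddGroup α] {f : ι → α} (hf : Summable f) (N : Finset ι) (g : ι → α) :
    Summable fun j => if j ∈ N then g j else f j :=
  hf.congr_cofinite (N.eventually_cofinite_notMem.mono fun _ hj => (if_neg hj).symm)

lemma hasSum_zero_of_hasSum_ite_eq {ι : Type*} [DecidableEq ι] {b : ι → ℝ} {i : ι}
    (h : HasSum (fun j => if j = i then 0 else b j) (-b i)) : HasSum b 0 := by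
  convert h.add (hasSum_ite_eq i (b i)) using 1
  · ext j
    split_ifs <;> simp_all
  · ring

lemma ConvexOn.le_const_mul_on_segment {s : Set ℝ} {f : ℝ → ℝ} {c x y z : ℝ}
    (hf : ConvexOn ℝ s f) (hx : x ∈ s) (hy : y ∈ s) (hfx : f x ≤ c * x) (hfy : f y ≤ c * y)
    (hz : z ∈ segment ℝ x y) : f z ≤ c * z := by
  have hg := hf.add ((LinearMap.mulLeft ℝ (-c)).convexOn hf.1)
  have := hg.le_on_segment hx hy hz
  simp only [Pi.add_apply, LinearMap.mulLeft_apply] at this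
  linarith [max_le (by linarith : f x + -c * x ≤ 0) (by linarith : f y + -c * y ≤ 0)]

section PowerSeries

variable {a : ℕ → ℝ}

lemma summable_mul_pow_of_mem_Icc (ha : Summable a) {x : ℝ} (hx : x ∈ Icc (-1) 1) :
    Summable fun j => a j * x ^ j :=
  ha.abs.of_norm_bounded fun j => by
    rw [Real.norm_eq_abs, abs_mul, abs_pow]
    exact mul_le_of_le_one_right (abs_nonneg _) (pow_le_one₀ (abs_nonneg x) (abs_le.2 hx))

lemma continuousOn_tsum_mul_pow (ha : Summable a) :
    ContinuousOn (fun x => ∑' j, a j * x ^ j) (Icc (-1) 1) :=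
  continuousOn_tsum (fun j => (continuous_const.mul (continuous_pow j)).continuousOn) ha.abs
    fun j x hx => by
      rw [Real.norm_eq_abs, abs_mul, abs_pow]
      exact mul_le_of_le_one_right (abs_nonneg _) (pow_le_one₀ (abs_nonneg x) (abs_le.2 hx))

lemma Icc_zero_one_subset_Icc_neg_one_one : Icc (0 : ℝ) 1 ⊆ Icc (-1) 1 :=
  Icc_subset_Icc (by norm_num) le_rfl

lemma monotoneOn_tsum_mul_pow (ha₀ : ∀ j, 0 ≤ a j) (ha : Summable a) :
    MonotoneOn (fun x => ∑' j, a j * x ^ j) (Icc 0 1) := fun _ hx _ hy hxy =>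
  (summable_mul_pow_of_mem_Icc ha (Icc_zero_one_subset_Icc_neg_one_one hx)).tsum_le_tsum
    (fun j => mul_le_mul_of_nonneg_left (pow_le_pow_left₀ hx.1 hxy j) (ha₀ j))
    (summable_mul_pow_of_mem_Icc ha (Icc_zero_one_subset_Icc_neg_one_one hy))

lemma convexOn_tsum_mul_pow (ha₀ : ∀ j, 0 ≤ a j) (ha : Summable a) :
    ConvexOn ℝ (Icc 0 1) (fun x => ∑' j, a j * x ^ j) := by
  have hsum : ∀ x ∈ Icc (0 : ℝ) 1, Summable fun j => a j * x ^ j := fun x hx =>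
    summable_mul_pow_of_mem_Icc ha (Icc_zero_one_subset_Icc_neg_one_one hx)
  refine ⟨convex_Icc 0 1, fun x hx y hy s t hs ht hst => ?_⟩
  have hxy := convex_Icc (0 : ℝ) 1 hx hy hs ht hst
  simp only [smul_eq_mul] at hxy ⊢
  have hs' := (hsum x hx).mul_left s
  have ht' := (hsum y hy).mul_left t
  calc ∑' j, a j * (s * x + t * y) ^ j
      ≤ ∑' j, (s * (a j * x ^ j) + t * (a j * y ^ j)) := by
        refine (hsum _ hxy).tsum_le_tsum (fun j => ?_) (hs'.add ht')
        have hpow : (s * x + t * y) ^ j ≤ s * x ^ j + t * y ^ j := by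
          simpa only [smul_eq_mul] using (convexOn_pow j).2 hx.1 hy.1 hs ht hst
        nlinarith [mul_le_mul_of_nonneg_left hpow (ha₀ j)]
    _ = s * ∑' j, a j * x ^ j + t * ∑' j, a j * y ^ j := by
        rw [hs'.tsum_add ht', tsum_mul_left, tsum_mul_left]

end PowerSeries

section Generating

variable {b v : ℕ → ℝ} {N : Finset ℕ}

/-- The paper's `B_𝑁(w, v)`. -/
def sumOn (b v : ℕ → ℝ) (N : Finset ℕ) (w : ℝ) : ℝ := ∑ j ∈ N, b j * v j * w ^ j

/-- The paper's `B̄_𝑁(w)`. -/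
noncomputable def tsumOff (b : ℕ → ℝ) (N : Finset ℕ) (w : ℝ) : ℝ :=
  ∑' j, if j ∈ N then 0 else b j * w ^ j

/-- The coefficients of `H` as a power series: the term `-b 1 * x` of `H` cancels the `j = 1`
term of `tsumOff`. -/
def coeffH (b v : ℕ → ℝ) (N : Finset ℕ) (j : ℕ) : ℝ :=
  if j ∈ N then b j * v j else if j = 1 then 0 else b j

lemma coeffH_nonneg (hb : ∀ j, j ≠ 1 → 0 ≤ b j) (h1N : 1 ∉ N) (hv : ∀ j ∈ N, 0 ≤ v j) (j : ℕ) :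
    0 ≤ coeffH b v N j := by
  unfold coeffH
  split_ifs with hjN hj1
  · exact mul_nonneg (hb j (ne_of_mem_of_not_mem hjN h1N)) (hv j hjN)
  · exact le_rfl
  · exact hb j hj1

lemma summable_coeffH (hb : Summable b) : Summable (coeffH b v N) := by
  refine (hb.ite_mem_finset {1} 0).ite_mem_finset N (fun j => b j * v j) |>.congr fun j => ?_
  simp [coeffH]

lemma sumOn_add_tsumOff_sub_eq_tsum (hb : Summable b) (h1N : 1 ∉ N) {x : ℝ}
    (hx : x ∈ Icc (-1) 1) :
    sumOn b v N x + tsumOff b N x - b 1 * x = ∑' j, coeffH b v N j * x ^ j := by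
  have hbx := summable_mul_pow_of_mem_Icc hb hx
  rw [sumOn, tsumOff, add_comm, tsum_ite_add_sum (hbx.ite_mem_finset N 0),
    (hbx.ite_mem_finset N _).tsum_eq_add_tsum_ite 1, if_neg h1N, pow_one, add_sub_cancel_left]
  congr 1 with j
  unfold coeffH
  split_ifs <;> simp_all [mul_assoc]

lemma tsumOff_one_add_sumOn_one_nonpos (hb : HasSum b 0) (hbN : ∀ j ∈ N, 0 ≤ b j)
    (hv : ∀ j ∈ N, v j ≤ 1) : tsumOff b N 1 + sumOn b v N 1 ≤ 0 := by
  have htot := tsum_ite_add_sum (g := b) (hb.summable.ite_mem_finset N 0)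
  simp only [ite_self, hb.tsum_eq] at htot
  have hon : sumOn b v N 1 ≤ ∑ j ∈ N, b j := Finset.sum_le_sum fun j hj => by
    simpa using mul_le_of_le_one_right (hbN j hj) (hv j hj)
  simp only [tsumOff, one_pow, mul_one]
  linarith

end Generating

section Duhamel

variable (β u : ℝ)

/-- The solution at time `t` of `y' = β y + g`, `y 0 = u`. -/
noncomputable def duhamel (g : ℝ → ℝ) (t : ℝ) : ℝ :=
  Real.exp (β * t) * (u + ∫ s in (0 : ℝ)..t, Real.exp (-(β * s)) * g s)

lemma duhamel_const (C t : ℝ) :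
    duhamel β u (fun _ => -β * C) t = C + Real.exp (β * t) * (u - C) := by
  have hderiv : ∀ s ∈ uIcc (0 : ℝ) t, HasDerivAt (fun s => C * Real.exp (-(β * s)))
      (Real.exp (-(β * s)) * (-β * C)) s := fun s _ => by
    have hlin : HasDerivAt (fun s => -(β * s)) (-β) s :=
      ((hasDerivAt_id s).const_mul β).neg.congr_deriv (by simp)
    exact (hlin.exp.const_mul C).congr_deriv (by ring)
  have hint : IntervalIntegrable (fun s => Real.exp (-(β * s)) * (-β * C)) volume 0 t := by
    apply Continuous.intervalIntegrable
    fun_prop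
  rw [duhamel, intervalIntegral.integral_eq_sub_of_hasDerivAt hderiv hint, mul_add, mul_sub,
    ← mul_assoc, ← mul_assoc, mul_comm _ C, mul_assoc C, ← Real.exp_add]
  simp only [mul_zero, neg_zero, Real.exp_zero, add_neg_cancel, mul_one]
  ring

variable {β u}

lemma duhamel_mono {g g' : ℝ → ℝ} {t : ℝ} (ht : 0 ≤ t) (hg : ContinuousOn g (Icc 0 t))
    (hg' : ContinuousOn g' (Icc 0 t)) (hle : ∀ s ∈ Icc 0 t, g s ≤ g' s) :
    duhamel β u g t ≤ duhamel β u g' t := by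
  have hint : ∀ h : ℝ → ℝ, ContinuousOn h (Icc 0 t) →
      IntervalIntegrable (fun s => Real.exp (-(β * s)) * h s) volume 0 t := fun h hh =>
    ContinuousOn.intervalIntegrable (by rw [uIcc_of_le ht]; fun_prop)
  refine mul_le_mul_of_nonneg_left (add_le_add_right ?_ u) (Real.exp_pos _).le
  exact intervalIntegral.integral_mono_on ht (hint g hg) (hint g' hg') fun s hs =>
    mul_le_mul_of_nonneg_left (hle s hs) (Real.exp_pos _).le

lemma continuousOn_duhamel {g : ℝ → ℝ} {T : ℝ} (hT : 0 ≤ T) (hg : ContinuousOn g (Icc 0 T)) :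
    ContinuousOn (duhamel β u g) (Icc 0 T) := by
  have hint : IntegrableOn (fun s => Real.exp (-(β * s)) * g s) (uIcc 0 T) := by
    rw [uIcc_of_le hT]
    exact ContinuousOn.integrableOn_Icc (by fun_prop)
  have hprim := intervalIntegral.continuousOn_primitive_interval hint
  rw [uIcc_of_le hT] at hprim
  exact (Real.continuous_exp.comp (continuous_const.mul continuous_id)).continuousOn.mul
    (continuousOn_const.add hprim)

end Duhamel

section Iteration

variable {β ρ u : ℝ} {H : ℝ → ℝ}

lemma mapsTo_duhamel (hρu : ρ < u) (hmono : MonotoneOn H (Icc ρ u)) (hρ : -β * ρ ≤ H ρ)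
    (hu : H u ≤ -β * u) {y : ℝ → ℝ} {T : ℝ} (hcont : ContinuousOn (fun s => H (y s)) (Icc 0 T))
    (hy : MapsTo y (Icc 0 T) (Ioc ρ u)) :
    MapsTo (duhamel β u fun s => H (y s)) (Icc 0 T) (Ioc ρ u) := by
  intro t ht
  have hsub : Icc 0 t ⊆ Icc 0 T := Icc_subset_Icc_right ht.2
  have hbounds : ∀ s ∈ Icc 0 t, -β * ρ ≤ H (y s) ∧ H (y s) ≤ -β * u := fun s hs => by
    have hys := hy (hsub hs)
    exact ⟨hρ.trans (hmono (left_mem_Icc.2 hρu.le) (Ioc_subset_Icc_self hys) hys.1.le),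
      (hmono (Ioc_subset_Icc_self hys) (right_mem_Icc.2 hρu.le) hys.2).trans hu⟩
  have hlow := duhamel_mono (β := β) (u := u) ht.1 continuousOn_const (hcont.mono hsub)
    fun s hs => (hbounds s hs).1
  have hup := duhamel_mono (β := β) (u := u) ht.1 (hcont.mono hsub) continuousOn_const
    fun s hs => (hbounds s hs).2
  rw [duhamel_const] at hlow hup
  have hexp := Real.exp_pos (β * t)
  exact ⟨by nlinarith, by linarith⟩

variable {y : ℕ → ℝ → ℝ}

lemma duhamel_iterates (hρu : ρ < u) (hmono : MonotoneOn H (Icc ρ u))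
    (hcont : ContinuousOn H (Icc ρ u)) (hρ : -β * ρ ≤ H ρ) (hu : H u ≤ -β * u)
    (hy0 : ∀ t, y 0 t = u) (hy : ∀ n t, y (n + 1) t = duhamel β u (fun s => H (y n s)) t)
    {T : ℝ} (hT : 0 ≤ T) (n : ℕ) :
    ContinuousOn (y n) (Icc 0 T) ∧ MapsTo (y n) (Icc 0 T) (Ioc ρ u) := by
  induction n with
  | zero =>
    refine ⟨continuousOn_const.congr fun t _ => hy0 t, fun t _ => ?_⟩
    rw [hy0]
    exact ⟨hρu, le_rfl⟩
  | succ n ih =>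
    have hHy : ContinuousOn (fun s => H (y n s)) (Icc 0 T) :=
      hcont.comp ih.1 (ih.2.mono_right Ioc_subset_Icc_self)
    refine ⟨(continuousOn_duhamel hT hHy).congr fun t _ => hy n t, fun t ht => ?_⟩
    rw [hy]
    exact mapsTo_duhamel hρu hmono hρ hu hHy ih.2 ht

lemma duhamel_iterates_antitone (hρu : ρ < u) (hmono : MonotoneOn H (Icc ρ u))
    (hcont : ContinuousOn H (Icc ρ u)) (hρ : -β * ρ ≤ H ρ) (hu : H u ≤ -β * u)
    (hy0 : ∀ t, y 0 t = u) (hy : ∀ n t, y (n + 1) t = duhamel β u (fun s => H (y n s)) t)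
    {T : ℝ} (hT : 0 ≤ T) (n : ℕ) : ∀ t ∈ Icc 0 T, y (n + 1) t ≤ y n t := by
  have hinv := duhamel_iterates hρu hmono hcont hρ hu hy0 hy hT
  have hHy : ∀ n, ContinuousOn (fun s => H (y n s)) (Icc 0 T) := fun n =>
    hcont.comp (hinv n).1 ((hinv n).2.mono_right Ioc_subset_Icc_self)
  induction n with
  | zero =>
    intro t ht
    rw [hy0]
    exact ((hinv 1).2 ht).2
  | succ n ih =>
    intro t ht
    have hsub : Icc 0 t ⊆ Icc 0 T := Icc_subset_Icc_right ht.2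
    rw [hy (n + 1), hy n]
    refine duhamel_mono ht.1 ((hHy (n + 1)).mono hsub) ((hHy n).mono hsub) fun s hs => ?_
    exact hmono (Ioc_subset_Icc_self ((hinv (n + 1)).2 (hsub hs)))
      (Ioc_subset_Icc_self ((hinv n).2 (hsub hs))) (ih s (hsub hs))

end Iteration

theorem stmt_8_general
    (b : ℕ → ℝ)
    (hb_nonneg : ∀ j : ℕ, j ≠ 1 → 0 ≤ b j)
    (hb_sum : HasSum (fun j : ℕ => if j = 1 then 0 else b j) (-(b 1)))
    (N : Finset ℕ) (h1N : (1 : ℕ) ∉ N)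
    (v : ℕ → ℝ) (hv : ∀ j ∈ N, v j ∈ Set.Ico (0 : ℝ) 1)
    (ρv : ℝ)
    (hρv : IsLeast {w : ℝ | w ∈ Set.Icc (0 : ℝ) 1 ∧
        (∑' j : ℕ, if j ∈ N then 0 else b j * w ^ j)
          + (∑ j ∈ N, b j * v j * w ^ j) = 0} ρv)
    (u : ℝ) (hu : u ∈ Set.Ioc ρv 1)
    (H : ℝ → ℝ)
    (hH : ∀ x : ℝ, H x = (∑ j ∈ N, b j * v j * x ^ j)
        + (∑' j : ℕ, if j ∈ N then 0 else b j * x ^ j) - b 1 * x)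
    (y : ℕ → ℝ → ℝ)
    (hy0 : ∀ t : ℝ, y 0 t = u)
    (hyrec : ∀ (n : ℕ) (t : ℝ), y (n + 1) t =
      Real.exp (b 1 * t) * (u + ∫ s in (0 : ℝ)..t, Real.exp (-(b 1 * s)) * H (y n s))) :
    ∀ (n : ℕ) (t : ℝ), 0 ≤ t →
      ρv < y n t ∧ y n t ≤ u ∧ y (n + 1) t ≤ y n t := by
  obtain ⟨⟨hρ01, hFρ⟩, -⟩ := hρv
  obtain ⟨hρu, hu1⟩ := hu
  have hb : HasSum b 0 := hasSum_zero_of_hasSum_ite_eq hb_sum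
  have hH' : ∀ x, H x = sumOn b v N x + tsumOff b N x - b 1 * x := hH
  have hHc : EqOn (fun x => ∑' j, coeffH b v N j * x ^ j) H (Icc 0 1) := fun x hx =>
    (hH' x ▸ sumOn_add_tsumOff_sub_eq_tsum hb.summable h1N
      (Icc_zero_one_subset_Icc_neg_one_one hx)).symm
  have hc₀ := coeffH_nonneg hb_nonneg h1N fun j hj => (hv j hj).1
  have hcs : Summable (coeffH b v N) := summable_coeffH hb.summable
  have hsub : Icc ρv u ⊆ Icc 0 1 := Icc_subset_Icc hρ01.1 hu1
  have hmono : MonotoneOn H (Icc ρv u) := ((monotoneOn_tsum_mul_pow hc₀ hcs).congr hHc).mono hsub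
  have hcont : ContinuousOn H (Icc ρv u) :=
    ((continuousOn_tsum_mul_pow hcs).mono Icc_zero_one_subset_Icc_neg_one_one).congr
      hHc.symm |>.mono hsub
  have hHρ : H ρv = -b 1 * ρv := by
    change tsumOff b N ρv + sumOn b v N ρv = 0 at hFρ
    rw [hH']; linarith
  have hH1 : H 1 ≤ -b 1 := by
    have := tsumOff_one_add_sumOn_one_nonpos hb
      (fun j hj => hb_nonneg j (ne_of_mem_of_not_mem hj h1N)) fun j hj => (hv j hj).2.le
    rw [hH']; linarith
  have hHu : H u ≤ -b 1 * u :=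
    ((convexOn_tsum_mul_pow hc₀ hcs).congr hHc).le_const_mul_on_segment hρ01
      (right_mem_Icc.2 zero_le_one) hHρ.le (by linarith)
      (by rw [segment_eq_Icc hρ01.2]; exact ⟨hρu.le, hu1⟩)
  intro n t ht
  have hmaps := (duhamel_iterates hρu hmono hcont hHρ.ge hHu hy0 hyrec ht n).2 ⟨ht, le_rfl⟩
  exact ⟨hmaps.1, hmaps.2,
    duhamel_iterates_antitone hρu hmono hcont hHρ.ge hHu hy0 hyrec ht n t ⟨ht, le_rfl⟩⟩

/-- Let `v ∈ [0,1)^N` and `u ∈ (ρ(v),1]`. With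
`H(x) = B_N(x,v) + B̄_N(x) − b₁x`, `y₀(t) = u` and
`y_{n+1}(t) = e^{b₁t}(u + ∫₀ᵗ e^{−b₁s} H(y_n(s)) ds)`, one has, for all `n ≥ 0` and
`t ≥ 0`: `ρ(v) < y_n(t) ≤ u` and `y_{n+1}(t) ≤ y_n(t)`. -/
theorem stmt_8
    (b : ℕ → ℝ)
    (hb_nonneg : ∀ j : ℕ, j ≠ 1 → 0 ≤ b j)
    (hb1 : b 1 < 0)
    (hb_sum : HasSum (fun j : ℕ => if j = 1 then 0 else b j) (-(b 1)))
    (N : Finset ℕ) (hN : N.Nonempty) (h1N : (1 : ℕ) ∉ N)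
    (hbN : ∀ k ∈ N, 0 < b k)
    (v : ℕ → ℝ) (hv : ∀ j ∈ N, v j ∈ Set.Ico (0 : ℝ) 1)
    (ρv : ℝ)
    (hρv : IsLeast {w : ℝ | w ∈ Set.Icc (0 : ℝ) 1 ∧
        (∑' j : ℕ, if j ∈ N then 0 else b j * w ^ j)
          + (∑ j ∈ N, b j * v j * w ^ j) = 0} ρv)
    (u : ℝ) (hu : u ∈ Set.Ioc ρv 1)
    (H : ℝ → ℝ)
    (hH : ∀ x : ℝ, H x = (∑ j ∈ N, b j * v j * x ^ j)
        + (∑' j : ℕ, if j ∈ N then 0 else b j * x ^ j) - b 1 * x)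
    (y : ℕ → ℝ → ℝ)
    (hy0 : ∀ t : ℝ, y 0 t = u)
    (hyrec : ∀ (n : ℕ) (t : ℝ), y (n + 1) t =
      Real.exp (b 1 * t) * (u + ∫ s in (0 : ℝ)..t, Real.exp (-(b 1 * s)) * H (y n s))) :
    ∀ (n : ℕ) (t : ℝ), 0 ≤ t →
      ρv < y n t ∧ y n t ≤ u ∧ y (n + 1) t ≤ y n t :=
  stmt_8_general b hb_nonneg hb_sum N h1N v hv ρv hρv u hu H hH y hy0 hyrec
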